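/- Let ℱ ⊆ 𝒮 and consider the graph obtained from the set-cover gadget graph G(U,𝒮) by contracting all edges g s_j with S_j ∈ ℱ — that is, the graph whose vertex set is obtained from V(G(U,𝒮)) by replacing the set {g} ∪ {s_j : S_j ∈ ℱ} with a single new vertex g*, where g* is adjacent to exactly those remaining vertices that are adjacent in G(U,𝒮) to some vertex of {g} ∪ {s_j : S_j ∈ ℱ}, and all other adjacencies are unchanged. If this contracted graph is chordal, then ℱ is a set cover of U, i.e., every element of U belongs to some member of ℱ. -/

import Mathlib

/-- Vertices of the set-cover gadget graph: a vertex `s j` for every set `S_j`,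
vertices `a i`, `b i`, `c i` for every universe element `u_i`, and a special vertex `g`. -/
inductive SCVert (n m : ℕ) where
  | s : Fin m → SCVert n m
  | a : Fin n → SCVert n m
  | b : Fin n → SCVert n m
  | c : Fin n → SCVert n m
  | g : SCVert n m
deriving DecidableEq

/-- The base relation for the edges of the set-cover gadget graph for the family
`S : Fin m → Set (Fin n)`. -/
def scRel (n m : ℕ) (S : Fin m → Set (Fin n)) : SCVert n m → SCVert n m → Prop
  | .s _, .s _ => True
  | .g, .s _ => True
  | .g, .a _ => True
  | .g, .b _ => True
  | .a i, .c i' => i = i'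
  | .b i, .c i' => i = i'
  | .c i, .s j => i ∈ S j
  | _, _ => False

/-- The set-cover gadget graph `G(U, 𝒮)`. -/
def scGadget (n m : ℕ) (S : Fin m → Set (Fin n)) : SimpleGraph (SCVert n m) :=
  SimpleGraph.fromRel (scRel n m S)

/-- The graph obtained from the set-cover gadget graph by contracting all edges
`g s_j` with `j ∈ F`: the vertices `{g} ∪ {s_j : j ∈ F}` are replaced by the single
vertex `g` (playing the role of `g*`), which is adjacent to exactly those remaining
vertices adjacent in the gadget graph to some vertex of `{g} ∪ {s_j : j ∈ F}`;
all other adjacencies are unchanged. -/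
def scContracted (n m : ℕ) (S : Fin m → Set (Fin n)) (F : Set (Fin m)) :
    SimpleGraph {v : SCVert n m // ∀ j ∈ F, v ≠ SCVert.s j} :=
  SimpleGraph.fromRel (fun x y =>
    if x.val = SCVert.g then
      (scGadget n m S).Adj SCVert.g y.val ∨
        ∃ j ∈ F, (scGadget n m S).Adj (SCVert.s j) y.val
    else (scGadget n m S).Adj x.val y.val)

/-- `C` is (the vertex set of) an induced cycle on `ℓ` vertices of `G`. -/
def IsInducedCycle {α : Type*} (G : SimpleGraph α) (ℓ : ℕ) (C : Set α) : Prop :=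
  C.ncard = ℓ ∧ Nonempty (G.induce C ≃g SimpleGraph.cycleGraph ℓ)

/-! If `u_i` is not covered by `ℱ`, then `c_i` does not become adjacent to `g*`, and
`g* – a_i – c_i – b_i – g*` is an induced 4-cycle of the contracted graph. -/

namespace SimpleGraph

variable {α : Type*} {G : SimpleGraph α}

theorem isInducedCycle_range {ℓ : ℕ} (f : cycleGraph ℓ ↪g G) :
    IsInducedCycle G ℓ (Set.range f) := by
  refine ⟨?_, ⟨Iso.symm ⟨Equiv.ofInjective f f.injective, f.map_adj_iff⟩⟩⟩
  rw [← Nat.card_coe_set_eq, Nat.card_range_of_injective f.injective, Nat.card_eq_fintype_card,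
    Fintype.card_fin]

theorem exists_isInducedCycle_four {w x y z : α} (hwy : w ≠ y) (hxz : x ≠ z)
    (hwx : G.Adj w x) (hxy : G.Adj x y) (hyz : G.Adj y z) (hzw : G.Adj z w)
    (hnwy : ¬ G.Adj w y) (hnxz : ¬ G.Adj x z) :
    ∃ C, IsInducedCycle G 4 C := by
  let f : Fin 4 → α := ![w, x, y, z]
  have hf : Function.Injective f := by
    intro p q hpq
    fin_cases p <;> fin_cases q <;> simp_all [f, G.ne_of_adj, (G.ne_of_adj _).symm]
  refine ⟨_, isInducedCycle_range ⟨⟨f, hf⟩, fun {p q} => ?_⟩⟩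
  fin_cases p <;> fin_cases q <;>
    simp [f, hwx, hxy, hyz, hzw, hnwy, hnxz, hwx.symm, hxy.symm, hyz.symm, hzw.symm,
      G.adj_comm y w, G.adj_comm z x] <;> decide

end SimpleGraph

namespace scContracted

variable {n m : ℕ} {S : Fin m → Set (Fin n)} {F : Set (Fin m)}

theorem adj_g_a (i : Fin n) :
    (scContracted n m S F).Adj ⟨.g, by simp⟩ ⟨.a i, by simp⟩ := by
  simp [scContracted, scGadget, scRel]

theorem adj_a_c (i : Fin n) :
    (scContracted n m S F).Adj ⟨.a i, by simp⟩ ⟨.c i, by simp⟩ := by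
  simp [scContracted, scGadget, scRel]

theorem adj_c_b (i : Fin n) :
    (scContracted n m S F).Adj ⟨.c i, by simp⟩ ⟨.b i, by simp⟩ := by
  simp [scContracted, scGadget, scRel]

theorem adj_b_g (i : Fin n) :
    (scContracted n m S F).Adj ⟨.b i, by simp⟩ ⟨.g, by simp⟩ := by
  simp [scContracted, scGadget, scRel]

theorem not_adj_a_b (i : Fin n) :
    ¬ (scContracted n m S F).Adj ⟨.a i, by simp⟩ ⟨.b i, by simp⟩ := by
  simp [scContracted, scGadget, scRel]

theorem adj_g_c_iff (i : Fin n) :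
    (scContracted n m S F).Adj ⟨.g, by simp⟩ ⟨.c i, by simp⟩ ↔ ∃ j ∈ F, i ∈ S j := by
  simp [scContracted, scGadget, scRel]

end scContracted

/-- If contracting the edges `g s_j`, `j ∈ F`, of the set-cover gadget graph yields a
chordal graph (no induced cycle on ≥ 4 vertices), then `F` indexes a set cover of the
universe. -/
theorem stmt_14 (n m : ℕ) (S : Fin m → Set (Fin n)) (F : Set (Fin m))
    (hchordal : ∀ ℓ : ℕ, 4 ≤ ℓ →
      ∀ C : Set {v : SCVert n m // ∀ j ∈ F, v ≠ SCVert.s j},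
        ¬ IsInducedCycle (scContracted n m S F) ℓ C) :
    ∀ i : Fin n, ∃ j ∈ F, i ∈ S j := by
  intro i
  by_contra hi
  obtain ⟨C, hC⟩ := SimpleGraph.exists_isInducedCycle_four (by simp) (by simp)
    (scContracted.adj_g_a i) (scContracted.adj_a_c i) (scContracted.adj_c_b i)
    (scContracted.adj_b_g i) (mt (scContracted.adj_g_c_iff i).1 hi) (scContracted.not_adj_a_b i)
  exact hchordal 4 le_rfl C hC
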